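/- Let G be a countable discrete amenable group with right Følner sequence (F_k), Ξ an action of G by *-automorphisms on a unital C*-algebra M, ι : A → M an equivariant unital *-homomorphism from a unital C*-algebra A with G-action Θ (Ξ_g ∘ ι = ι ∘ Θ_g), and a ∈ A positive. Assume the set of Θ-invariant states on A is nonempty. Then lim_{k→∞} ‖(1/|F_k|) ∑_{g∈F_k} Ξ_g ι(a)‖ exists and equals sup { φ(a) : φ a Θ-invariant state on A vanishing on ker ι }. -/

import Mathlib

open Filter

/-- A state on a unital C*-algebra: a linear, unital, positive functional. -/
def IsState {A : Type*} [NormedRing A] [StarRing A] [NormedAlgebra ℂ A]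
    (φ : A → ℂ) : Prop :=
  (∀ x y : A, φ (x + y) = φ x + φ y) ∧
  (∀ (c : ℂ) (x : A), φ (c • x) = c * φ x) ∧
  φ 1 = 1 ∧
  ∀ a : A, 0 ≤ (φ (star a * a)).re ∧ (φ (star a * a)).im = 0

/-!
For an invariant state `ψ` vanishing on `ker ι`, invariance gives `ψ a = ψ y_k` with `y_k` the
`k`-th Følner average of `Θ_g a`, and cutting `y_k` off at the level `‖ι y_k‖` by functional
calculus changes it only by an element of `ker ι`; hence `ψ a ≤ ‖ι y_k‖` for every `k`.
Conversely, take a state `φ_k` of `M` attaining the norm of `ι y_k` and average its translates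
`φ_k ∘ Ξ_g` over `F_k`. By the Følner property these states are asymptotically invariant, so any
ultrafilter limit `Ψ` is an invariant state of `M`; then `Ψ ∘ ι` is an invariant state of `A`
vanishing on `ker ι` whose value at `a` is the ultrafilter limit of the norms.
-/

open Topology
open scoped ComplexOrder CStarAlgebra

lemma eq_zero_of_forall_add_sq_le {b K : ℝ} (h : ∀ r : ℝ, (b + r) ^ 2 ≤ K + r ^ 2) : b = 0 := by
  by_contra hb
  have hK : 2 * b * (K / (2 * b)) = K := by field_simp
  nlinarith [h (K / (2 * b)), sq_pos_of_ne_zero hb]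

lemma Complex.eq_of_norm_le_of_add_eq {z w : ℂ} {a b : ℝ} (hz : ‖z‖ ≤ a) (hw : ‖w‖ ≤ b)
    (h : z + w = a + b) : z = a := by
  have hre : z.re = a := by
    have := congrArg Complex.re h
    simp only [Complex.add_re, Complex.ofReal_re] at this
    linarith [Complex.re_le_norm z, Complex.re_le_norm w]
  have hz0 : 0 ≤ z := Complex.re_eq_norm.1 (le_antisymm (Complex.re_le_norm z) (hre ▸ hz))
  exact Complex.ext (by simpa using hre) (by simpa using (Complex.nonneg_iff.1 hz0).2.symm)

lemma Finset.norm_sum_sub_sum_le_card_symmDiff_mul {ι E : Type*} [DecidableEq ι]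
    [SeminormedAddCommGroup E] (s t : Finset ι) {f : ι → E} {C : ℝ} (hf : ∀ i, ‖f i‖ ≤ C) :
    ‖∑ i ∈ t, f i - ∑ i ∈ s, f i‖ ≤ (symmDiff s t).card * C := by
  rw [← Finset.sum_sdiff_sub_sum_sdiff, symmDiff_def, Finset.sup_eq_union,
    Finset.card_union_of_disjoint disjoint_sdiff_sdiff, Nat.cast_add, add_mul, add_comm]
  refine (norm_sub_le _ _).trans (add_le_add ?_ ?_) <;>
    simpa using norm_sum_le_of_le _ fun i _ => hf i

lemma Ultrafilter.exists_forall_tendsto_of_norm_le {ι X E : Type*} [SeminormedAddCommGroup E]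
    [ProperSpace E] (U : Ultrafilter ι) (f : ι → X → E) (C : X → ℝ)
    (hf : ∀ i x, ‖f i x‖ ≤ C x) : ∃ F : X → E, ∀ x, Tendsto (f · x) U (𝓝 (F x)) := by
  have hbdd : ∀ x, (U.map (f · x) : Filter E) ≤ 𝓟 (Metric.closedBall 0 (C x)) := fun x => by
    rw [Ultrafilter.coe_map]
    exact tendsto_principal.2 (Eventually.of_forall fun i => mem_closedBall_zero_iff.2 (hf i x))
  choose F _ hF using fun x => (isCompact_closedBall (0 : E) (C x)).ultrafilter_le_nhds _ (hbdd x)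
  exact ⟨F, hF⟩

lemma tendsto_csSup_of_forall_ultrafilter {ι : Type*} {l : Filter ι} {c : ι → ℝ} {S : Set ℝ}
    (hle : ∀ r ∈ S, ∀ i, r ≤ c i)
    (hlim : ∀ U : Ultrafilter ι, ↑U ≤ l → ∃ r ∈ S, Tendsto c U (𝓝 r)) :
    Tendsto c l (𝓝 (sSup S)) := by
  refine (tendsto_iff_ultrafilter _ _ _).2 fun U hU => ?_
  obtain ⟨r, hr, hcr⟩ := hlim U hU
  obtain ⟨i, -⟩ := U.nonempty_of_mem univ_mem
  have hsup : sSup S = r :=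
    le_antisymm (ge_of_tendsto' hcr fun j => csSup_le ⟨r, hr⟩ fun s hs => hle s hs j)
      (le_csSup ⟨c i, fun s hs => hle s hs i⟩ hr)
  rwa [hsup]

namespace IsState

section Basic

variable {B : Type*} [NormedRing B] [StarRing B] [NormedAlgebra ℂ B] {φ : B → ℂ}

lemma mk (hadd : ∀ x y : B, φ (x + y) = φ x + φ y)
    (hsmul : ∀ (c : ℂ) (x : B), φ (c • x) = c * φ x) (hone : φ 1 = 1)
    (hpos : ∀ x : B, 0 ≤ φ (star x * x)) : IsState φ :=
  ⟨hadd, hsmul, hone, fun x =>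
    ⟨(Complex.nonneg_iff.1 (hpos x)).1, (Complex.nonneg_iff.1 (hpos x)).2.symm⟩⟩

lemma star_mul_self_nonneg (h : IsState φ) (x : B) : 0 ≤ φ (star x * x) :=
  Complex.nonneg_iff.2 ⟨(h.2.2.2 x).1, (h.2.2.2 x).2.symm⟩

def toLinearMap (h : IsState φ) : B →ₗ[ℂ] ℂ where
  toFun := φ
  map_add' := h.1
  map_smul' := h.2.1

lemma map_zero (h : IsState φ) : φ 0 = 0 := _root_.map_zero h.toLinearMap

lemma map_sub (h : IsState φ) (x y : B) : φ (x - y) = φ x - φ y := _root_.map_sub h.toLinearMap x y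

lemma map_sum (h : IsState φ) {ι : Type*} (s : Finset ι) (f : ι → B) :
    φ (∑ i ∈ s, f i) = ∑ i ∈ s, φ (f i) :=
  _root_.map_sum h.toLinearMap f s

lemma map_algebraMap (h : IsState φ) (c : ℂ) : φ (algebraMap ℂ B c) = c := by
  rw [Algebra.algebraMap_eq_smul_one, h.2.1, h.2.2.1, mul_one]

lemma comp {C F : Type*} [NormedRing C] [StarRing C] [NormedAlgebra ℂ C] [FunLike F B C]
    [AlgHomClass F ℂ B C] [StarHomClass F B C] {ψ : C → ℂ} (h : IsState ψ) (π : F) :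
    IsState (ψ ∘ π) :=
  mk (fun x y => by simp [h.1]) (fun c x => by simp [h.2.1]) (by simp [h.2.2.1])
    (fun x => by simpa [map_star] using h.star_mul_self_nonneg (π x))

lemma average {ι : Type*} {s : Finset ι} (hs : s.Nonempty) {φ : ι → B → ℂ}
    (h : ∀ i, IsState (φ i)) : IsState fun x => (s.card : ℂ)⁻¹ * ∑ i ∈ s, φ i x := by
  have hcard : (s.card : ℂ) ≠ 0 := Nat.cast_ne_zero.2 hs.card_pos.ne'
  refine mk (fun x y => ?_) (fun c x => ?_) ?_ (fun x => ?_)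
  · simp only [(h _).1, Finset.sum_add_distrib, mul_add]
  · simp only [(h _).2.1, ← Finset.mul_sum]
    ring
  · simp [(h _).2.2.1, hcard]
  · exact mul_nonneg (by positivity) (Finset.sum_nonneg fun i _ => (h i).star_mul_self_nonneg x)

lemma of_tendsto {ι : Type*} {l : Filter ι} [l.NeBot] {φ : ι → B → ℂ} (h : ∀ i, IsState (φ i))
    {Φ : B → ℂ} (hΦ : ∀ x, Tendsto (φ · x) l (𝓝 (Φ x))) : IsState Φ :=
  mk (fun x y => tendsto_nhds_unique (hΦ _) <|
      ((hΦ x).add (hΦ y)).congr fun i => ((h i).1 x y).symm)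
    (fun c x => tendsto_nhds_unique (hΦ _) <|
      ((hΦ x).const_mul c).congr fun i => ((h i).2.1 c x).symm)
    (tendsto_nhds_unique (hΦ 1) (tendsto_const_nhds.congr fun i => ((h i).2.2.1).symm))
    (fun x => ge_of_tendsto' (hΦ _) fun i => (h i).star_mul_self_nonneg x)

end Basic

section CStarAlgebra

variable {B : Type*} [CStarAlgebra B] [PartialOrder B] [StarOrderedRing B] {φ : B → ℂ}

lemma apply_nonneg (h : IsState φ) {x : B} (hx : 0 ≤ x) : 0 ≤ φ x := by
  obtain ⟨d, rfl⟩ := CStarAlgebra.nonneg_iff_eq_star_mul_self.1 hx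
  exact h.star_mul_self_nonneg d

lemma mono (h : IsState φ) {x y : B} (hxy : x ≤ y) : φ x ≤ φ y := by
  simpa [h.map_sub] using h.apply_nonneg (sub_nonneg.2 hxy)

/-- Cutting `y` off at `t = ‖π y‖` by functional calculus changes it by an element of `ker π`. -/
lemma apply_le_norm_map {C : Type*} [CStarAlgebra C] [Nontrivial C] [PartialOrder C]
    [StarOrderedRing C] (h : IsState φ) (π : B →⋆ₐ[ℂ] C) (hker : ∀ x, π x = 0 → φ x = 0)
    {y : B} (hy : 0 ≤ y) : φ y ≤ ‖π y‖ := by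
  set t := ‖π y‖
  have hcut : π (y - cfc (min · t) y) = 0 := by
    have hspec : (spectrum ℝ (π y)).EqOn (min · t) id := fun s hs =>
      min_eq_left ((Real.le_norm_self s).trans (spectrum.norm_le_norm_of_mem hs))
    rw [_root_.map_sub, StarAlgHom.map_cfc π _ y, cfc_congr hspec, cfc_id ℝ (π y), sub_self]
  have hle : cfc (min · t) y ≤ algebraMap ℝ B t :=
    (cfc_le_algebraMap_iff _ t y).2 fun s _ => min_le_right s t
  calc φ y = φ (cfc (min · t) y) := by rw [← sub_eq_zero, ← h.map_sub, hker _ hcut]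
    _ ≤ φ (algebraMap ℝ B t) := h.mono hle
    _ = t := by rw [IsScalarTower.algebraMap_apply ℝ ℂ B, h.map_algebraMap, Complex.coe_algebraMap]

lemma re_apply_le_norm_average {G A M : Type*} [Group G] [CStarAlgebra A] [PartialOrder A]
    [StarOrderedRing A] [CStarAlgebra M] [Nontrivial M] [PartialOrder M] [StarOrderedRing M]
    {Θ : G → A ≃⋆ₐ[ℂ] A} {Ξ : G → M ≃⋆ₐ[ℂ] M} {ι : A →⋆ₐ[ℂ] M}
    (hequiv : ∀ (g : G) (x : A), Ξ g (ι x) = ι (Θ g x)) {ψ : A → ℂ} (hψ : IsState ψ)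
    (hinv : ∀ (g : G) (x : A), ψ (Θ g x) = ψ x) (hker : ∀ x, ι x = 0 → ψ x = 0)
    {s : Finset G} (hs : s.Nonempty) {a : A} (ha : 0 ≤ a) :
    (ψ a).re ≤ ‖(s.card : ℂ)⁻¹ • ∑ g ∈ s, Ξ g (ι a)‖ := by
  set y := (s.card : ℂ)⁻¹ • ∑ g ∈ s, Θ g a
  have hy : 0 ≤ y := smul_nonneg (by positivity) (Finset.sum_nonneg fun g _ => map_nonneg (Θ g) ha)
  have hψy : ψ y = ψ a := by
    simp [y, hψ.2.1, hψ.map_sum, hinv, hs.card_pos.ne']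
  have hιy : ι y = (s.card : ℂ)⁻¹ • ∑ g ∈ s, Ξ g (ι a) := by
    simp [y, hequiv]
  simpa [hψy, hιy] using (Complex.le_def.1 (hψ.apply_le_norm_map ι hker hy)).1

end CStarAlgebra

end IsState

section UnitalContraction

variable {D : Type*} [CStarAlgebra D] [Nontrivial D]

lemma IsSelfAdjoint.norm_add_I_mul_smul_one_sq_le {z : D} (hz : IsSelfAdjoint z) (r : ℝ) :
    ‖z + (Complex.I * r) • (1 : D)‖ ^ 2 ≤ ‖z‖ ^ 2 + r ^ 2 := by
  set c := Complex.I * r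
  have hstar : star c = -c := by simp [c]
  have hc : -c * c = (r ^ 2 : ℝ) := by
    simp only [c]
    push_cast
    ring_nf
    simp
  have hprod : star (z + c • (1 : D)) * (z + c • 1) = z * z + (r ^ 2 : ℝ) • (1 : D) := by
    rw [star_add, hz.star_eq, star_smul, star_one, hstar, ← Complex.coe_smul, ← hc]
    simp only [add_mul, mul_add, smul_mul_assoc, mul_smul_comm, one_mul, mul_one]
    module
  calc ‖z + c • (1 : D)‖ ^ 2 = ‖z * z + (r ^ 2 : ℝ) • (1 : D)‖ := by
        rw [← hprod, CStarRing.norm_star_mul_self, sq]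
    _ ≤ ‖z * z‖ + ‖(r ^ 2 : ℝ) • (1 : D)‖ := norm_add_le _ _
    _ ≤ ‖z‖ ^ 2 + r ^ 2 := by
        rw [norm_smul, norm_one, mul_one, Real.norm_of_nonneg (sq_nonneg r), sq ‖z‖]
        gcongr
        exact norm_mul_le z z

namespace ContinuousLinearMap

variable {φ : D →L[ℂ] ℂ}

lemma im_apply_eq_zero_of_isSelfAdjoint (hone : φ 1 = 1) (hφ : ‖φ‖ ≤ 1) {z : D}
    (hz : IsSelfAdjoint z) : (φ z).im = 0 := by
  refine eq_zero_of_forall_add_sq_le (K := ‖z‖ ^ 2) fun r => ?_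
  have hle : ‖φ z + Complex.I * r‖ ≤ ‖z + (Complex.I * r) • (1 : D)‖ := by
    simpa [hone] using φ.le_of_opNorm_le hφ (z + (Complex.I * r) • 1)
  calc ((φ z).im + r) ^ 2 ≤ ‖φ z + Complex.I * r‖ ^ 2 := by
        rw [Complex.sq_norm, Complex.normSq_apply]
        simp only [Complex.add_re, Complex.add_im, Complex.mul_re, Complex.mul_im, Complex.I_re,
          Complex.I_im, Complex.ofReal_re, Complex.ofReal_im]
        nlinarith [sq_nonneg (φ z).re]
    _ ≤ ‖z + (Complex.I * r) • (1 : D)‖ ^ 2 := by gcongr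
    _ ≤ ‖z‖ ^ 2 + r ^ 2 := hz.norm_add_I_mul_smul_one_sq_le r

lemma isState_of_norm_le_one [PartialOrder D] [StarOrderedRing D] (hone : φ 1 = 1)
    (hφ : ‖φ‖ ≤ 1) : IsState φ := by
  refine IsState.mk (map_add φ) (fun c x => map_smul φ c x) hone fun x => ?_
  set y := star x * x
  have hy : 0 ≤ y := star_mul_self_nonneg x
  set t := ‖y‖
  have hφt : φ (algebraMap ℝ D t) = t := by
    rw [Algebra.algebraMap_eq_smul_one, ← Complex.coe_smul, map_smul, hone, smul_eq_mul, mul_one]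
  have hsub : ‖algebraMap ℝ D t - y‖ ≤ t := by
    calc ‖algebraMap ℝ D t - y‖ ≤ ‖algebraMap ℝ D t‖ :=
          CStarAlgebra.norm_le_norm_of_nonneg_of_le
            (sub_nonneg.2 (IsSelfAdjoint.le_algebraMap_norm_self hy.isSelfAdjoint))
            (sub_le_self _ hy)
      _ = t := by rw [norm_algebraMap', Real.norm_of_nonneg (norm_nonneg y)]
  have hre : t - (φ y).re ≤ t :=
    calc t - (φ y).re = (φ (algebraMap ℝ D t - y)).re := by simp [hφt]
      _ ≤ ‖φ (algebraMap ℝ D t - y)‖ := Complex.re_le_norm _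
      _ ≤ ‖algebraMap ℝ D t - y‖ := by simpa using φ.le_of_opNorm_le hφ (algebraMap ℝ D t - y)
      _ ≤ t := hsub
  exact Complex.nonneg_iff.2
    ⟨by linarith, (im_apply_eq_zero_of_isSelfAdjoint hone hφ hy.isSelfAdjoint).symm⟩

end ContinuousLinearMap

end UnitalContraction

section NormingState

variable {D : Type*} [CStarAlgebra D] [Nontrivial D] [PartialOrder D] [StarOrderedRing D]

lemma norm_one_add_of_nonneg {y : D} (hy : 0 ≤ y) : ‖1 + y‖ = 1 + ‖y‖ := by
  refine le_antisymm ((norm_add_le _ _).trans_eq (by rw [norm_one])) ?_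
  have hmem := (spectrum.add_mem_add_iff (r := ‖y‖) (s := (1 : ℝ))).2
    (CStarAlgebra.norm_mem_spectrum_of_nonneg hy)
  rw [map_one, add_comm ‖y‖] at hmem
  simpa [abs_of_nonneg (add_nonneg zero_le_one (norm_nonneg y))] using
    spectrum.norm_le_norm_of_mem hmem

/-- Hahn–Banach at `1 + y`, where the norm `1 + ‖y‖` can only be attained if `1 ↦ 1` and
`y ↦ ‖y‖`. -/
lemma exists_isState_apply_eq_norm {y : D} (hy : 0 ≤ y) :
    ∃ φ : D → ℂ, IsState φ ∧ (∀ x, ‖φ x‖ ≤ ‖x‖) ∧ φ y = ‖y‖ := by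
  have hnorm := norm_one_add_of_nonneg hy
  obtain ⟨φ, hφ, hφy⟩ := exists_dual_vector ℂ (1 + y) (by rw [hnorm]; positivity)
  have hle : ∀ x, ‖φ x‖ ≤ ‖x‖ := fun x => by simpa [hφ] using φ.le_opNorm x
  have hsum : φ 1 + φ y = (1 : ℝ) + ‖y‖ := by rw [← map_add, hφy, hnorm]; push_cast; rfl
  have hone : φ 1 = 1 := by
    simpa using Complex.eq_of_norm_le_of_add_eq (by simpa using hle 1) (hle y) hsum
  refine ⟨φ, φ.isState_of_norm_le_one hone hφ.le, hle, ?_⟩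
  exact Complex.eq_of_norm_le_of_add_eq (hle y) (by simpa using hle 1)
    (by rw [add_comm, hsum, add_comm])

end NormingState

section TranslateAverage

variable {G M : Type*} [CStarAlgebra M] (Ξ : G → M ≃⋆ₐ[ℂ] M)

noncomputable def translateAverage (s : Finset G) (φ : M → ℂ) (y : M) : ℂ :=
  (s.card : ℂ)⁻¹ * ∑ g ∈ s, φ (Ξ g y)

variable {Ξ}

lemma IsState.translateAverage {s : Finset G} (hs : s.Nonempty) {φ : M → ℂ} (hφ : IsState φ) :
    IsState (translateAverage Ξ s φ) :=
  IsState.average hs fun g => hφ.comp (Ξ g)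

lemma norm_translateAverage_le (s : Finset G) {φ : M → ℂ} (hφ : ∀ y, ‖φ y‖ ≤ ‖y‖) (y : M) :
    ‖translateAverage Ξ s φ y‖ ≤ ‖y‖ := by
  have hsum : ‖∑ g ∈ s, φ (Ξ g y)‖ ≤ s.card * ‖y‖ := by
    simpa [StarAlgEquiv.norm_map] using norm_sum_le_of_le s fun g _ => hφ (Ξ g y)
  rw [translateAverage, norm_mul, norm_inv, Complex.norm_natCast]
  calc (s.card : ℝ)⁻¹ * ‖∑ g ∈ s, φ (Ξ g y)‖ ≤ (s.card : ℝ)⁻¹ * (s.card * ‖y‖) := by gcongr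
    _ ≤ ‖y‖ := by
        rw [← mul_assoc]
        exact mul_le_of_le_one_left (norm_nonneg y) (inv_mul_le_one_of_le₀ le_rfl (by positivity))

lemma norm_translateAverage_sub_le [Group G] [DecidableEq G]
    (hΞ : ∀ g h : G, ∀ y : M, Ξ (g * h) y = Ξ g (Ξ h y))
    (s : Finset G) {φ : M → ℂ} (hφ : ∀ y, ‖φ y‖ ≤ ‖y‖) (h : G) (y : M) :
    ‖translateAverage Ξ s φ (Ξ h y) - translateAverage Ξ s φ y‖ ≤
      (symmDiff s (s.image (· * h))).card / s.card * ‖y‖ := by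
  have hshift : ∑ g ∈ s, φ (Ξ g (Ξ h y)) = ∑ g ∈ s.image (· * h), φ (Ξ g y) := by
    rw [Finset.sum_image fun _ _ _ _ => mul_right_cancel]
    simp [hΞ]
  have hdiff := Finset.norm_sum_sub_sum_le_card_symmDiff_mul s (s.image (· * h))
    (f := fun g => φ (Ξ g y)) fun g => (hφ _).trans_eq (StarAlgEquiv.norm_map _ _)
  rw [translateAverage, translateAverage, hshift, ← mul_sub, norm_mul, norm_inv,
    Complex.norm_natCast]
  calc _ ≤ (s.card : ℝ)⁻¹ * ((symmDiff s (s.image (· * h))).card * ‖y‖) := by gcongr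
    _ = _ := by ring

end TranslateAverage

lemma exists_invariant_state_tendsto_translateAverage {G M ι : Type*} [Group G] [DecidableEq G]
    [CStarAlgebra M] {Ξ : G → M ≃⋆ₐ[ℂ] M} (hΞ : ∀ g h : G, ∀ y : M, Ξ (g * h) y = Ξ g (Ξ h y))
    {l : Filter ι} {F : ι → Finset G} (hne : ∀ i, (F i).Nonempty)
    (hFolner : ∀ g : G, Tendsto
      (fun i => ((symmDiff (F i) ((F i).image (· * g))).card : ℝ) / (F i).card) l (𝓝 0))
    {φ : ι → M → ℂ} (hφ : ∀ i, IsState (φ i)) (hφle : ∀ i y, ‖φ i y‖ ≤ ‖y‖)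
    (U : Ultrafilter ι) (hU : ↑U ≤ l) :
    ∃ Ψ : M → ℂ, IsState Ψ ∧ (∀ g y, Ψ (Ξ g y) = Ψ y) ∧
      ∀ y, Tendsto (fun i => translateAverage Ξ (F i) (φ i) y) U (𝓝 (Ψ y)) := by
  obtain ⟨Ψ, hΨ⟩ := U.exists_forall_tendsto_of_norm_le
    (fun i => translateAverage Ξ (F i) (φ i)) norm fun i => norm_translateAverage_le _ (hφle i)
  refine ⟨Ψ, IsState.of_tendsto (fun i => (hφ i).translateAverage (hne i)) hΨ, fun g y => ?_, hΨ⟩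
  have hsmall : Tendsto (fun i =>
      translateAverage Ξ (F i) (φ i) (Ξ g y) - translateAverage Ξ (F i) (φ i) y) U (𝓝 0) :=
    squeeze_zero_norm (fun i => norm_translateAverage_sub_le hΞ _ (hφle i) g y)
      (by simpa using ((hFolner g).mul_const ‖y‖).mono_left hU)
  exact sub_eq_zero.1 (tendsto_nhds_unique ((hΨ _).sub (hΨ y)) hsmall)

theorem norm_average_tendsto_ergodic_max_of_model_general
    {G : Type*} [Group G] [DecidableEq G] {A M : Type*}
    [NormedRing A] [StarRing A] [CStarRing A] [NormedAlgebra ℂ A] [StarModule ℂ A]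
    [CompleteSpace A]
    [NormedRing M] [StarRing M] [CStarRing M] [NormedAlgebra ℂ M] [StarModule ℂ M]
    [CompleteSpace M]
    (F : ℕ → Finset G) (hne : ∀ k, (F k).Nonempty)
    (hFolner : ∀ g : G,
      Tendsto (fun k => ((symmDiff (F k) ((F k).image (· * g))).card : ℝ) / (F k).card)
        atTop (nhds 0))
    (Θ : G → A ≃⋆ₐ[ℂ] A)
    (Ξ : G → M ≃⋆ₐ[ℂ] M) (hΞ : ∀ g h : G, ∀ y : M, Ξ (g * h) y = Ξ g (Ξ h y))
    (ι : A →⋆ₐ[ℂ] M) (hequiv : ∀ (g : G) (x : A), Ξ g (ι x) = ι (Θ g x))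
    (a : A) (ha : ∃ b : A, a = star b * b) :
    Tendsto (fun k => ‖((F k).card : ℂ)⁻¹ • ∑ g ∈ F k, Ξ g (ι a)‖) atTop
      (nhds (sSup {r : ℝ | ∃ ψ : A → ℂ, IsState ψ ∧
        (∀ (g : G) (x : A), ψ (Θ g x) = ψ x) ∧
        (∀ x : A, ι x = 0 → ψ x = 0) ∧ (ψ a).re = r})) := by
  let _ : CStarAlgebra A := {}
  let _ : CStarAlgebra M := {}
  let _ : PartialOrder A := CStarAlgebra.spectralOrder A
  let _ : StarOrderedRing A := CStarAlgebra.spectralOrderedRing A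
  let _ : PartialOrder M := CStarAlgebra.spectralOrder M
  let _ : StarOrderedRing M := CStarAlgebra.spectralOrderedRing M
  obtain ⟨b, hb⟩ := ha
  have ha : 0 ≤ a := hb ▸ star_mul_self_nonneg b
  rcases subsingleton_or_nontrivial M with hM | hM
  · convert tendsto_const_nhds (x := (0 : ℝ)) using 2
    · simp [Subsingleton.elim _ (0 : M)]
    · refine (congrArg sSup (Set.eq_empty_of_forall_notMem ?_)).trans Real.sSup_empty
      rintro r ⟨ψ, hψ, -, hker, -⟩
      exact one_ne_zero (hψ.2.2.1.symm.trans (hker 1 (Subsingleton.elim _ _)))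
  refine tendsto_csSup_of_forall_ultrafilter
    (fun r ⟨ψ, hψ, hinv, hker, hr⟩ k =>
      hr ▸ hψ.re_apply_le_norm_average hequiv hinv hker (hne k) ha)
    fun U hU => ?_
  have havg : ∀ k, 0 ≤ ((F k).card : ℂ)⁻¹ • ∑ g ∈ F k, Ξ g (ι a) := fun k =>
    smul_nonneg (by positivity) (Finset.sum_nonneg fun g _ => map_nonneg _ (map_nonneg ι ha))
  choose φ hφ hφle hφnorm using fun k => exists_isState_apply_eq_norm (havg k)
  obtain ⟨Ψ, hΨ, hΨinv, hlim⟩ :=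
    exists_invariant_state_tendsto_translateAverage hΞ hne hFolner hφ hφle U hU
  refine ⟨(Ψ (ι a)).re, ⟨Ψ ∘ ι, hΨ.comp ι, fun g x => by simp [← hequiv, hΨinv],
    fun x hx => by simp [hx, hΨ.map_zero], rfl⟩, ?_⟩
  have hval : ∀ k, translateAverage Ξ (F k) (φ k) (ι a) =
      ‖((F k).card : ℂ)⁻¹ • ∑ g ∈ F k, Ξ g (ι a)‖ := fun k => by
    rw [← hφnorm k, (hφ k).2.1, (hφ k).map_sum, translateAverage]
  refine ((Complex.continuous_re.tendsto _).comp (hlim _)).congr fun k => ?_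
  simp only [Function.comp_apply, hval, Complex.ofReal_re]

/-- Main theorem (possibly non-faithful C*-model): the norms of the Følner
averages of `ι(a)` converge to `m(a | Ann(ker ι))`, the supremum of `ψ(a)`
over invariant states `ψ` on `A` vanishing on `ker ι`. -/
theorem norm_average_tendsto_ergodic_max_of_model
    {G : Type*} [Group G] [DecidableEq G] [Countable G] {A M : Type*}
    [NormedRing A] [StarRing A] [CStarRing A] [NormedAlgebra ℂ A] [StarModule ℂ A]
    [CompleteSpace A]
    [NormedRing M] [StarRing M] [CStarRing M] [NormedAlgebra ℂ M] [StarModule ℂ M]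
    [CompleteSpace M]
    (F : ℕ → Finset G) (hne : ∀ k, (F k).Nonempty)
    (hFolner : ∀ g : G,
      Tendsto (fun k => ((symmDiff (F k) ((F k).image (· * g))).card : ℝ) / (F k).card)
        atTop (nhds 0))
    (Θ : G → A ≃⋆ₐ[ℂ] A) (hΘ : ∀ g h : G, ∀ x : A, Θ (g * h) x = Θ g (Θ h x))
    (Ξ : G → M ≃⋆ₐ[ℂ] M) (hΞ : ∀ g h : G, ∀ y : M, Ξ (g * h) y = Ξ g (Ξ h y))
    (ι : A →⋆ₐ[ℂ] M) (hequiv : ∀ (g : G) (x : A), Ξ g (ι x) = ι (Θ g x))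
    (hstate : ∃ ψ : A → ℂ, IsState ψ ∧ ∀ (g : G) (x : A), ψ (Θ g x) = ψ x)
    (a : A) (ha : ∃ b : A, a = star b * b) :
    Tendsto (fun k => ‖((F k).card : ℂ)⁻¹ • ∑ g ∈ F k, Ξ g (ι a)‖) atTop
      (nhds (sSup {r : ℝ | ∃ ψ : A → ℂ, IsState ψ ∧
        (∀ (g : G) (x : A), ψ (Θ g x) = ψ x) ∧
        (∀ x : A, ι x = 0 → ψ x = 0) ∧ (ψ a).re = r})) :=
  norm_average_tendsto_ergodic_max_of_model_general F hne hFolner Θ Ξ hΞ ι hequiv a ha
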